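/- Let K be the function field of a smooth curve (field with non-archimedean absolute values satisfying a product formula), let f ∈ K[z] be monic of degree d ≥ 3, let φ(x,y) = (y, x + f(y)), and let s ≥ 1 be the number of places v ∈ M_K with ρ_v(f) > 1. If ρ_v(f) > 1 for at least one place (φ not isotrivial), then the number of points P ∈ K² with ĥ_φ(P) = 0 is at most (3d⁶)^s, where ĥ_φ(P) = Σ_v (λ⁺_v(P) + λ⁻_v(P)) is the canonical height. In particular, ĥ_φ(P) = 0 if and only if P is periodic for φ, and φ has at most (3d⁶)^s periodic points in K². -/

import Mathlib

/-!
Write the orbit of `P` as `(zₙ₋₁, zₙ)`, so that `zₙ₊₁ - zₙ₋₁ = f(zₙ)`. At a place `v`, once `zₙ`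
is farther than `ρ_v(f)` from a root of `f`, all factors of `f(zₙ) = ∏ (zₙ - ζ)` have the same
size and the orbit escapes at rate `d` in one time direction, so a local height is positive.
Hence height zero means that at every place the orbit stays within `ρ_v(f)` of the roots. At a
place with `ρ_v(f) > 1` such an orbit passes, at every step, within distance `< 1` of a root of
`f` or of a root of `f / (z - ζ) ± 1`: at most `3d²` centres. At the other places it stays in a
disc of radius `1`. By the product formula, two such points whose coordinates share centres at
all `s` places coincide, so there are at most `(3d²)^(2s) ≤ (3d⁶)^s` of them. This finite set
is invariant under the injective map `φ`, so its points are periodic; conversely periodic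
orbits are bounded, so their heights vanish.
-/

open Polynomial Filter

section Ultrametric

variable {L : Type*} [Field L] {w : AbsoluteValue L ℝ}

theorem AbsoluteValue.isNonarchimedean_of_natCast_le_one (w : AbsoluteValue L ℝ)
    (h : ∀ n : ℕ, w n ≤ 1) : IsNonarchimedean w := by
  have : IsUltrametricDist (WithAbs w) :=
    IsUltrametricDist.isUltrametricDist_of_forall_norm_natCast_le_one fun n => by
      simpa [WithAbs.norm_eq_apply_ofAbs, ← WithAbs.equiv_apply] using h n
  intro x y
  have := IsUltrametricDist.norm_add_le_max (WithAbs.toAbs w x) (WithAbs.toAbs w y)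
  rwa [← WithAbs.toAbs_add, WithAbs.norm_toAbs_eq, WithAbs.norm_toAbs_eq,
    WithAbs.norm_toAbs_eq] at this

theorem IsNonarchimedean.abv_sub_le_max (hna : IsNonarchimedean w) (a b : L) :
    w (a - b) ≤ max (w a) (w b) := by
  simpa [sub_eq_add_neg] using hna a (-b)

theorem IsNonarchimedean.abv_sub_le_max_sub (hna : IsNonarchimedean w) (a b c : L) :
    w (a - c) ≤ max (w (a - b)) (w (b - c)) := by
  simpa using hna (a - b) (b - c)

theorem abv_lt_one_of_mul_eq_sub {u t p r : L} (hu : 1 < w u) (h : u * t = p - r)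
    (hna : IsNonarchimedean w) (hp : w p ≤ 1) (hr : w r ≤ 1) : w t < 1 := by
  have : w u * w t ≤ 1 := by
    rw [← map_mul, h]
    exact (hna.abv_sub_le_max p r).trans (max_le hp hr)
  nlinarith [w.nonneg t]

theorem abv_add_one_lt_one_or_abv_sub_one_lt_one (hna : IsNonarchimedean w) {x ζ a b q : L}
    (hu : 1 < w (x - ζ)) (hq : (x - ζ) * q = a - b) (hjump : 1 < w (a - b))
    (ha : 1 < w (a - ζ) → w (a - x) ≤ 1) (hb : 1 < w (b - ζ) → w (b - x) ≤ 1) :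
    w (q + 1) < 1 ∨ w (q - 1) < 1 := by
  rcases le_or_gt (w (a - ζ)) 1 with haζ | haζ
  · have hbx : w (b - x) ≤ 1 := hb <| by
      by_contra! hbζ
      exact hjump.not_ge ((hna.abv_sub_le_max_sub _ ζ _).trans (max_le haζ (w.map_sub ζ _ ▸ hbζ)))
    exact Or.inl (abv_lt_one_of_mul_eq_sub hu (by linear_combination hq) hna haζ hbx)
  · have hax := ha haζ
    have hbζ : w (b - ζ) ≤ 1 := by
      by_contra! hbζ
      exact hjump.not_ge ((hna.abv_sub_le_max_sub _ x _).trans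
        (max_le hax (w.map_sub x _ ▸ hb hbζ)))
    exact Or.inr (abv_lt_one_of_mul_eq_sub hu (by linear_combination hq) hna hax hbζ)

end Ultrametric

section RootSpread

variable {L : Type*} [Field L] (w : AbsoluteValue L ℝ) (F : L[X])

open scoped Classical in
/-- The paper's `ρ_v(f)`: the largest of `1` and the distances between two roots of `F`. -/
noncomputable def rootSpread : ℝ :=
  (F.roots.toFinset ×ˢ F.roots.toFinset).fold max 1 fun p => w (p.1 - p.2)

variable {w F}

theorem one_le_rootSpread : 1 ≤ rootSpread w F :=
  (Finset.le_fold_max _).mpr (Or.inl le_rfl)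

theorem abv_sub_le_rootSpread {ζ ζ' : L} (hζ : ζ ∈ F.roots) (hζ' : ζ' ∈ F.roots) :
    w (ζ - ζ') ≤ rootSpread w F := by
  classical
  exact (Finset.le_fold_max _).mpr <| Or.inr ⟨(ζ, ζ'), by simp [hζ, hζ'], le_rfl⟩

theorem one_lt_rootSpread_iff (hF : F ≠ 0) :
    1 < rootSpread w F ↔ ∃ ζ₁ ζ₂, F.eval ζ₁ = 0 ∧ F.eval ζ₂ = 0 ∧ 1 < w (ζ₁ - ζ₂) := by
  classical
  simp [rootSpread, Finset.lt_fold_max, hF, and_assoc]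

theorem exists_abv_sub_eq_rootSpread (h : 1 < rootSpread w F) :
    ∃ ζ ∈ F.roots, ∃ ζ' ∈ F.roots, w (ζ - ζ') = rootSpread w F := by
  classical
  obtain h1 | ⟨p, hp, hle⟩ := (Finset.le_fold_max _).mp (le_refl (rootSpread w F))
  · exact absurd h1 h.not_ge
  · simp only [Finset.mem_product, Multiset.mem_toFinset] at hp
    exact ⟨p.1, hp.1, p.2, hp.2, le_antisymm (abv_sub_le_rootSpread hp.1 hp.2) hle⟩

end RootSpread

theorem Multiset.le_prod_map_of_one_le {α R : Type*} [CommMonoidWithZero R] [PartialOrder R]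
    [ZeroLEOneClass R] [PosMulMono R] {s : Multiset α} {f : α → R} (h : ∀ a ∈ s, 1 ≤ f a)
    {a : α} (ha : a ∈ s) : f a ≤ (s.map f).prod := by
  classical
  rw [← Multiset.prod_map_erase ha]
  exact le_mul_of_one_le_right (zero_le_one.trans (h a ha))
    (Multiset.one_le_prod_map fun b hb => h b (Multiset.mem_of_mem_erase hb))

section Centers

variable {L : Type*} [Field L] {w : AbsoluteValue L ℝ} {F : L[X]}

theorem abv_eval_eq_prod_roots [IsAlgClosed L] (hF : F.Monic) (x : L) :
    w (F.eval x) = (F.roots.map fun ζ => w (x - ζ)).prod := by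
  rw [(IsAlgClosed.splits F).eval_eq_prod_roots_of_monic hF, map_multiset_prod, Multiset.map_map]
  rfl

theorem exists_mem_roots_abv_sub_lt_one [IsAlgClosed L] (hF : F.Monic) {x : L}
    (h : w (F.eval x) < 1) : ∃ β ∈ F.roots, w (x - β) < 1 := by
  by_contra! hfar
  exact h.not_ge (abv_eval_eq_prod_roots hF x ▸ Multiset.one_le_prod_map hfar)

variable [DecidableEq L]

noncomputable def deflation (F : L[X]) (ζ : L) : L[X] :=
  ((F.roots.erase ζ).map fun a => X - C a).prod

noncomputable def centers (F : L[X]) : Multiset L :=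
  F.roots + F.roots.bind fun ζ => (deflation F ζ + 1).roots + (deflation F ζ - 1).roots

variable {ζ : L}

theorem eval_deflation (x : L) :
    (deflation F ζ).eval x = ((F.roots.erase ζ).map (x - ·)).prod := by
  simp [deflation, eval_multiset_prod, Multiset.map_map]

theorem monic_deflation : (deflation F ζ).Monic :=
  monic_multiset_prod_of_monic _ _ fun a _ => monic_X_sub_C a

theorem natDegree_deflation : (deflation F ζ).natDegree = Multiset.card (F.roots.erase ζ) :=
  natDegree_multiset_prod_X_sub_C_eq_card _

theorem eval_eq_mul_eval_deflation [IsAlgClosed L] (hF : F.Monic) (hζ : ζ ∈ F.roots) (x : L) :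
    F.eval x = (x - ζ) * (deflation F ζ).eval x := by
  rw [(IsAlgClosed.splits F).eval_eq_prod_roots_of_monic hF, eval_deflation,
    Multiset.prod_map_erase hζ]

theorem degree_one_lt_degree_deflation [IsAlgClosed L] (hd : 2 ≤ F.natDegree)
    (hζ : ζ ∈ F.roots) : (1 : L[X]).degree < (deflation F ζ).degree := by
  rw [degree_one, degree_eq_natDegree monic_deflation.ne_zero, natDegree_deflation,
    Multiset.card_erase_of_mem hζ, IsAlgClosed.card_roots_eq_natDegree, Nat.cast_pos,
    Nat.pred_eq_sub_one]
  omega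

theorem card_centers_le : Multiset.card (centers F) ≤ 3 * F.natDegree ^ 2 := by
  have hdefl : ∀ ζ, (deflation F ζ).natDegree ≤ F.natDegree := fun ζ =>
    natDegree_deflation.trans_le ((Multiset.card_le_card (Multiset.erase_le ζ _)).trans
      (card_roots' F))
  have hbind : ∀ ζ ∈ F.roots, Multiset.card ((deflation F ζ + 1).roots + (deflation F ζ - 1).roots)
      ≤ 2 * F.natDegree := fun ζ _ => by
    rw [Multiset.card_add, two_mul]
    gcongr
    · exact (card_roots' _).trans ((natDegree_add_le _ _).trans (by simpa using hdefl ζ))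
    · exact (card_roots' _).trans ((natDegree_sub_le _ _).trans (by simpa using hdefl ζ))
  rw [centers, Multiset.card_add, Multiset.card_bind]
  have hsum := Multiset.sum_le_card_nsmul _ _ fun x hx => by
    obtain ⟨ζ, hζ, rfl⟩ := Multiset.mem_map.mp hx
    exact hbind ζ hζ
  rw [Multiset.card_map, smul_eq_mul] at hsum
  simp only [Function.comp_def]
  have hroots := card_roots' F
  nlinarith

theorem mem_centers_of_mem_roots (h : ζ ∈ F.roots) : ζ ∈ centers F :=
  Multiset.mem_add.mpr (Or.inl h)

theorem mem_centers_of_mem_roots_add_one (hζ : ζ ∈ F.roots) {β : L}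
    (h : β ∈ (deflation F ζ + 1).roots) : β ∈ centers F :=
  Multiset.mem_add.mpr (Or.inr (Multiset.mem_bind.mpr ⟨ζ, hζ, Multiset.mem_add.mpr (Or.inl h)⟩))

theorem mem_centers_of_mem_roots_sub_one (hζ : ζ ∈ F.roots) {β : L}
    (h : β ∈ (deflation F ζ - 1).roots) : β ∈ centers F :=
  Multiset.mem_add.mpr (Or.inr (Multiset.mem_bind.mpr ⟨ζ, hζ, Multiset.mem_add.mpr (Or.inr h)⟩))

end Centers

section StaysNearRoots

variable {L : Type*} [Field L] {w : AbsoluteValue L ℝ} {F : L[X]} {z : ℤ → L}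

/-- The local filled Julia set condition. -/
def StaysNearRoots (w : AbsoluteValue L ℝ) (F : L[X]) (z : ℤ → L) : Prop :=
  ∀ n, ∀ ζ ∈ F.roots, w (z n - ζ) ≤ rootSpread w F

theorem StaysNearRoots.abv_sub_le (hna : IsNonarchimedean w) {z' : ℤ → L}
    (hz : StaysNearRoots w F z) (hz' : StaysNearRoots w F z') {ζ : L} (hζ : ζ ∈ F.roots)
    (m k : ℤ) : w (z m - z' k) ≤ rootSpread w F :=
  (hna.abv_sub_le_max_sub _ ζ _).trans (max_le (hz m ζ hζ) (w.map_sub ζ _ ▸ hz' k ζ hζ))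

theorem StaysNearRoots.abv_le (hna : IsNonarchimedean w) (hz : StaysNearRoots w F z) {ζ : L}
    (hζ : ζ ∈ F.roots) (n : ℤ) :
    w (z n) ≤ max (rootSpread w F) (w ζ) := by
  simpa using (hna (z n - ζ) ζ).trans (max_le_max (hz n ζ hζ) le_rfl)

theorem exists_root_rootSpread_le_abv_sub (hna : IsNonarchimedean w) (h : 1 < rootSpread w F)
    (x : L) : ∃ ζ ∈ F.roots, rootSpread w F ≤ w (x - ζ) := by
  obtain ⟨ζ, hζ, ζ', hζ', heq⟩ := exists_abv_sub_eq_rootSpread h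
  have := hna.abv_sub_le_max_sub ζ x ζ'
  rw [heq, w.map_sub ζ x] at this
  rcases le_max_iff.mp this with h | h
  · exact ⟨ζ, hζ, h⟩
  · exact ⟨ζ', hζ', h⟩

theorem abv_sub_root_pow_le_of_rootSpread_lt [IsAlgClosed L] (hna : IsNonarchimedean w)
    (hF : F.Monic) (hrec : ∀ n, z (n + 1) - z (n - 1) = F.eval (z n)) {ζ₀ : L}
    (hζ₀ : ζ₀ ∈ F.roots) {n : ℤ} (hn : rootSpread w F < w (z n - ζ₀)) :
    w (z n - ζ₀) ^ F.natDegree ≤ max (w (z (n + 1) - ζ₀)) (w (z (n - 1) - ζ₀)) := by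
  have hfac : ∀ ζ ∈ F.roots, w (z n - ζ) = w (z n - ζ₀) := fun ζ hζ => by
    rw [← sub_add_sub_cancel (z n) ζ₀ ζ]
    exact hna.add_eq_left_of_lt ((abv_sub_le_rootSpread hζ₀ hζ).trans_lt hn)
  calc w (z n - ζ₀) ^ F.natDegree = w (F.eval (z n)) := by
        rw [abv_eval_eq_prod_roots hF, Multiset.map_congr rfl hfac, Multiset.map_const',
          Multiset.prod_replicate, IsAlgClosed.card_roots_eq_natDegree]
    _ = w ((z (n + 1) - ζ₀) - (z (n - 1) - ζ₀)) := by rw [← hrec, sub_sub_sub_cancel_right]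
    _ ≤ _ := hna.abv_sub_le_max _ _

variable [IsAlgClosed L] [DecidableEq L]

theorem StaysNearRoots.exists_root_abv_sub_le_one (hna : IsNonarchimedean w) (hF : F.Monic)
    (hd : 2 ≤ F.natDegree) (hρ : 1 < rootSpread w F)
    (hrec : ∀ n, z (n + 1) - z (n - 1) = F.eval (z n)) (hz : StaysNearRoots w F z) (n : ℤ) :
    ∃ ζ ∈ F.roots, w (z n - ζ) ≤ 1 := by
  by_contra! hfar
  obtain ⟨ζ₀, hζ₀, hζ₀far⟩ := exists_root_rootSpread_le_abv_sub hna hρ (z n)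
  obtain ⟨ζ₁, hζ₁⟩ : ∃ ζ₁, ζ₁ ∈ F.roots.erase ζ₀ := Multiset.card_pos_iff_exists_mem.mp <| by
    rw [Multiset.card_erase_of_mem hζ₀, IsAlgClosed.card_roots_eq_natDegree,
      Nat.pred_eq_sub_one]
    omega
  have hprod := (hz.abv_sub_le hna hz hζ₀ (n + 1) (n - 1)).trans' <| calc
    rootSpread w F * w (z n - ζ₁)
      ≤ w (z n - ζ₀) * ((F.roots.erase ζ₀).map fun ζ => w (z n - ζ)).prod := by
        gcongr
        exact Multiset.le_prod_map_of_one_le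
          (fun ζ hζ => (hfar ζ (Multiset.mem_of_mem_erase hζ)).le) hζ₁
    _ = w (z (n + 1) - z (n - 1)) := by
        rw [hrec, eval_eq_mul_eval_deflation hF hζ₀, map_mul, eval_deflation, map_multiset_prod,
          Multiset.map_map]
        rfl
  nlinarith [hfar ζ₁ (Multiset.mem_of_mem_erase hζ₁)]

theorem StaysNearRoots.abv_sub_root_le_one_of_far (hna : IsNonarchimedean w) (hF : F.Monic)
    (hrec : ∀ n, z (n + 1) - z (n - 1) = F.eval (z n)) (hz : StaysNearRoots w F z) {n : ℤ}
    (hnear : ∀ ζ ∈ F.roots, 1 ≤ w (z n - ζ)) {ζs : L} (hζs : ζs ∈ F.roots)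
    (hfar : rootSpread w F ≤ w (z n - ζs)) :
    w (z n - ζs) = rootSpread w F ∧ ∀ ζ ∈ F.roots.erase ζs, w (z n - ζ) ≤ 1 := by
  have hζs_eq := le_antisymm (hz n ζs hζs) hfar
  refine ⟨hζs_eq, fun ζ hζ => ?_⟩
  have hprod := hrec n ▸ hz.abv_sub_le hna hz hζs (n + 1) (n - 1)
  rw [eval_eq_mul_eval_deflation hF hζs, map_mul, hζs_eq, eval_deflation, map_multiset_prod,
    Multiset.map_map] at hprod
  have hle := Multiset.le_prod_map_of_one_le (f := fun ζ => w (z n - ζ))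
    (fun ζ hζ => hnear ζ (Multiset.mem_of_mem_erase hζ)) hζ
  have := one_le_rootSpread (w := w) (F := F)
  simp only [Function.comp_def] at hprod
  nlinarith

theorem StaysNearRoots.exists_mem_centers_abv_sub_lt_one (hna : IsNonarchimedean w)
    (hF : F.Monic) (hd : 2 ≤ F.natDegree) (hρ : 1 < rootSpread w F)
    (hrec : ∀ n, z (n + 1) - z (n - 1) = F.eval (z n)) (hz : StaysNearRoots w F z) (n : ℤ) :
    ∃ c ∈ centers F, w (z n - c) < 1 := by
  by_cases hnear : ∃ ζ ∈ F.roots, w (z n - ζ) < 1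
  · obtain ⟨ζ, hζ, h⟩ := hnear
    exact ⟨ζ, mem_centers_of_mem_roots hζ, h⟩
  push Not at hnear
  obtain ⟨ζs, hζs, hfar⟩ := exists_root_rootSpread_le_abv_sub hna hρ (z n)
  obtain ⟨hζs_eq, hothers⟩ := hz.abv_sub_root_le_one_of_far hna hF hrec hnear hζs hfar
  have hu : 1 < w (z n - ζs) := hζs_eq ▸ hρ
  -- an orbit point far from `ζs` is near another root, hence near `z n`
  have hnbr : ∀ m, 1 < w (z m - ζs) → w (z m - z n) ≤ 1 := by
    intro m hm
    obtain ⟨ζ, hζ, hmζ⟩ := hz.exists_root_abv_sub_le_one hna hF hd hρ hrec m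
    have hζ' : ζ ∈ F.roots.erase ζs := (Multiset.mem_erase_of_ne (by rintro rfl; linarith)).mpr hζ
    exact (hna.abv_sub_le_max_sub _ ζ _).trans (max_le hmζ (w.map_sub ζ _ ▸ hothers ζ hζ'))
  have hwq : w ((deflation F ζs).eval (z n)) = 1 := by
    rw [eval_deflation, map_multiset_prod, Multiset.map_map]
    refine Multiset.prod_eq_one fun x hx => ?_
    obtain ⟨ζ, hζ, rfl⟩ := Multiset.mem_map.mp hx
    exact le_antisymm (hothers ζ hζ) (hnear ζ (Multiset.mem_of_mem_erase hζ))
  set q := (deflation F ζs).eval (z n)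
  have hq : (z n - ζs) * q = z (n + 1) - z (n - 1) := by
    rw [hrec, eval_eq_mul_eval_deflation hF hζs]
  have hjump : 1 < w (z (n + 1) - z (n - 1)) := by rwa [← hq, map_mul, hwq, mul_one]
  have hdeg := degree_one_lt_degree_deflation hd hζs
  rcases abv_add_one_lt_one_or_abv_sub_one_lt_one hna hu hq hjump (hnbr _) (hnbr _) with h | h
  · obtain ⟨β, hβ, hlt⟩ := exists_mem_roots_abv_sub_lt_one (monic_deflation.add_of_left hdeg)
      (by rwa [eval_add, eval_one])
    exact ⟨β, mem_centers_of_mem_roots_add_one hζs hβ, hlt⟩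
  · obtain ⟨β, hβ, hlt⟩ := exists_mem_roots_abv_sub_lt_one (monic_deflation.sub_of_left hdeg)
      (by rwa [eval_sub, eval_one])
    exact ⟨β, mem_centers_of_mem_roots_sub_one hζs hβ, hlt⟩

end StaysNearRoots

section Growth

variable {a : ℤ → ℝ} {R : ℝ} {D : ℕ}

theorem pow_pow_le_of_step (hR : 1 ≤ R) (hD : 2 ≤ D)
    (hstep : ∀ n, R < a n → a n ^ D ≤ max (a (n + 1)) (a (n - 1))) {m : ℤ} (hm : R < a m)
    (hm1 : a m ^ D ≤ a (m + 1)) (k : ℕ) :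
    a m ^ D ^ k ≤ a (m + k) ∧ a (m + k) ^ D ≤ a (m + k + 1) := by
  induction k with
  | zero => simpa using hm1
  | succ k ih =>
    obtain ⟨hk, hk1⟩ := ih
    have hRk : R < a (m + k) :=
      hm.trans_le ((le_self_pow₀ (hR.trans hm.le) (pow_ne_zero _ (by omega))).trans hk)
    have h1 : 1 < a (m + k) := hR.trans_lt hRk
    have hlt : a (m + k) < a (m + k + 1) := (lt_self_pow₀ h1 (by omega)).trans_le hk1
    have hR' : R < a (m + k + 1) := hRk.trans hlt
    push_cast
    rw [← add_assoc]
    refine ⟨?_, ?_⟩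
    · rw [pow_succ, pow_mul]
      exact (pow_le_pow_left₀ (pow_nonneg (by linarith) _) hk D).trans hk1
    · refine (le_max_iff.mp (hstep _ hR')).resolve_right fun h => ?_
      rw [add_sub_cancel_right] at h
      exact h.not_gt (hlt.trans (lt_self_pow₀ (h1.trans hlt) (by omega)))

theorem exists_log_growth_of_step_forward (hR : 1 ≤ R) (hD : 2 ≤ D)
    (hstep : ∀ n, R < a n → a n ^ D ≤ max (a (n + 1)) (a (n - 1))) {m : ℤ} (hm : R < a m)
    (hm1 : a m ^ D ≤ a (m + 1)) :
    ∃ c > 0, ∀ᶠ N : ℕ in atTop, c * (D : ℝ) ^ N ≤ Real.log (a N) := by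
  have hlog : 0 < Real.log (a m) := Real.log_pos (hR.trans_lt hm)
  have hD0 : (0 : ℝ) < D := by exact_mod_cast (by omega : 0 < D)
  refine ⟨Real.log (a m) / (D : ℝ) ^ m.toNat, div_pos hlog (by positivity),
    eventually_atTop.mpr ⟨m.toNat, fun N hN => ?_⟩⟩
  obtain ⟨k, hk⟩ : ∃ k : ℕ, (N : ℤ) = m + k := ⟨(N - m).toNat, by omega⟩
  calc Real.log (a m) / (D : ℝ) ^ m.toNat * (D : ℝ) ^ N
      = Real.log (a m) * (D : ℝ) ^ (N - m.toNat) := by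
        rw [pow_sub₀ _ hD0.ne' hN]
        ring
    _ ≤ Real.log (a m) * (D : ℝ) ^ k := by
        gcongr
        · exact_mod_cast (by omega : 1 ≤ D)
        · omega
    _ = Real.log (a m ^ D ^ k) := by
        rw [Real.log_pow]
        push_cast
        ring
    _ ≤ Real.log (a N) := by
        rw [hk]
        exact Real.log_le_log (pow_pos (by linarith) _) (pow_pow_le_of_step hR hD hstep hm hm1 k).1

theorem exists_log_growth_of_step (hR : 1 ≤ R) (hD : 2 ≤ D)
    (hstep : ∀ n, R < a n → a n ^ D ≤ max (a (n + 1)) (a (n - 1))) {m : ℤ} (hm : R < a m) :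
    ∃ c > 0, (∀ᶠ N : ℕ in atTop, c * (D : ℝ) ^ N ≤ Real.log (a N)) ∨
      ∀ᶠ N : ℕ in atTop, c * (D : ℝ) ^ N ≤ Real.log (a (-N)) := by
  rcases le_max_iff.mp (hstep m hm) with hm1 | hm1
  · obtain ⟨c, hc, h⟩ := exists_log_growth_of_step_forward hR hD hstep hm hm1
    exact ⟨c, hc, Or.inl h⟩
  · have hstep' : ∀ n, R < a (-n) → a (-n) ^ D ≤ max (a (-(n + 1))) (a (-(n - 1))) := by
      intro n hn
      rw [max_comm, neg_add', neg_sub', sub_neg_eq_add]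
      exact hstep _ hn
    have hm' : -(-m + 1) = m - 1 := by ring
    obtain ⟨c, hc, h⟩ := exists_log_growth_of_step_forward (a := fun n => a (-n)) (m := -m) hR hD
      hstep' (by rwa [neg_neg]) (by rwa [neg_neg, hm'])
    exact ⟨c, hc, Or.inr h⟩

theorem eq_zero_of_tendsto_inv_pow_mul_of_bounded {D C l : ℝ} (hD : 1 < D) {g : ℕ → ℝ}
    (hg : ∀ N, |g N| ≤ C) (h : Tendsto (fun N => D⁻¹ ^ N * g N) atTop (nhds l)) : l = 0 :=
  tendsto_nhds_unique h <| (tendsto_pow_atTop_nhds_zero_of_lt_one (by positivity)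
    (inv_lt_one_of_one_lt₀ hD)).zero_mul_isBoundedUnder_le ⟨C, eventually_map.mpr
      (Eventually.of_forall fun N => by simpa using hg N)⟩

theorem le_of_tendsto_inv_pow_mul {D c C l : ℝ} (hD : 1 < D) {g : ℕ → ℝ}
    (hg : ∀ᶠ N in atTop, c * D ^ N - C ≤ g N)
    (h : Tendsto (fun N => D⁻¹ ^ N * g N) atTop (nhds l)) : c ≤ l := by
  have hlim : Tendsto (fun N : ℕ => c - C * D⁻¹ ^ N) atTop (nhds c) := by
    simpa using tendsto_const_nhds.sub ((tendsto_pow_atTop_nhds_zero_of_lt_one (by positivity)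
      (inv_lt_one_of_one_lt₀ hD)).const_mul C)
  refine le_of_tendsto_of_tendsto hlim h (hg.mono fun N hN => ?_)
  have hpos : (0 : ℝ) < D ^ N := by positivity
  calc c - C * D⁻¹ ^ N = D⁻¹ ^ N * (c * D ^ N - C) := by
        rw [mul_sub, inv_pow, mul_left_comm, inv_mul_cancel₀ hpos.ne', mul_one, mul_comm]
    _ ≤ D⁻¹ ^ N * g N := by gcongr

end Growth

section Henon

variable {K : Type*} [Field K] {f : K[X]}

variable (f) in
def henon : Equiv.Perm (K × K) where
  toFun P := (P.2, P.1 + f.eval P.2)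
  invFun P := (P.2 - f.eval P.1, P.1)
  left_inv P := by simp
  right_inv P := by simp

variable (f) in
def henonOrbit (P : K × K) (n : ℤ) : K := ((henon f ^ n) P).2

theorem henon_zpow_apply (P : K × K) (n : ℤ) :
    (henon f ^ n) P = (henonOrbit f P (n - 1), henonOrbit f P n) := by
  refine Prod.ext ?_ rfl
  rw [← add_sub_cancel 1 n, zpow_one_add, Equiv.Perm.mul_apply, add_sub_cancel]
  rfl

theorem henonOrbit_add_one (P : K × K) (n : ℤ) :
    henonOrbit f P (n + 1) = henonOrbit f P (n - 1) + f.eval (henonOrbit f P n) := by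
  rw [henonOrbit, add_comm, zpow_one_add, Equiv.Perm.mul_apply, henon_zpow_apply]
  rfl

theorem henonOrbit_zero (P : K × K) : henonOrbit f P 0 = P.2 := rfl

theorem henonOrbit_neg_one (P : K × K) : henonOrbit f P (-1) = P.1 := by
  rw [henonOrbit, zpow_neg_one, Equiv.Perm.inv_def]
  rfl

theorem henonOrbit_henon (P : K × K) (n : ℤ) :
    henonOrbit f (henon f P) n = henonOrbit f P (n + 1) := by
  rw [henonOrbit, henonOrbit, zpow_add_one, Equiv.Perm.mul_apply]

theorem henon_iterate_apply (P : K × K) (N : ℕ) :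
    (henon f)^[N] P = (henonOrbit f P (N - 1), henonOrbit f P N) := by
  rw [Equiv.Perm.iterate_eq_pow, ← zpow_natCast, henon_zpow_apply]

theorem henon_symm_iterate_apply (P : K × K) (N : ℕ) :
    (henon f).symm^[N] P = (henonOrbit f P (-N - 1), henonOrbit f P (-N)) := by
  rw [← Equiv.Perm.inv_def, Equiv.Perm.iterate_eq_pow, inv_pow, ← zpow_natCast, ← zpow_neg,
    henon_zpow_apply]

theorem henonOrbit_periodic {P : K × K} {n : ℕ} (hP : (henon f)^[n] P = P) :
    Function.Periodic (henonOrbit f P) n := fun m => by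
  rw [henonOrbit, zpow_add, Equiv.Perm.mul_apply, zpow_natCast, ← Equiv.Perm.iterate_eq_pow, hP]
  rfl

theorem henonOrbit_map_recurrence {L : Type*} [Field L] (g : K →+* L) (P : K × K) (n : ℤ) :
    (g ∘ henonOrbit f P) (n + 1) - (g ∘ henonOrbit f P) (n - 1) =
      (f.map g).eval ((g ∘ henonOrbit f P) n) := by
  simp [henonOrbit_add_one, eval_map, eval₂_at_apply]

end Henon

section LocalHeight

variable {K L : Type*} [Field K] [Field L] [Algebra K L] {v : AbsoluteValue K ℝ}
  {w : AbsoluteValue L ℝ} {f : K[X]} {d : ℕ}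

theorem IsNonarchimedean.of_abv_algebraMap (hv : IsNonarchimedean v)
    (hw : ∀ x, w (algebraMap K L x) = v x) : IsNonarchimedean w :=
  w.isNonarchimedean_of_natCast_le_one fun n => by
    rw [← map_natCast (algebraMap K L) n, hw]
    exact hv.apply_natCast_le_one

theorem IsNonarchimedean.log_abv_sub_le (hna : IsNonarchimedean w) (x ζ : L) :
    Real.log (w (x - ζ)) ≤ Real.log (max (w x) 1) + Real.log (max (w ζ) 1) := by
  have h1 : 0 ≤ Real.log (max (w x) 1) := Real.log_nonneg (le_max_right _ _)
  have h2 : 0 ≤ Real.log (max (w ζ) 1) := Real.log_nonneg (le_max_right _ _)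
  rcases (w.nonneg (x - ζ)).eq_or_lt with h0 | hpos
  · rw [← h0, Real.log_zero]
    positivity
  rw [← Real.log_mul (by positivity) (by positivity)]
  refine Real.log_le_log hpos ((hna.abv_sub_le_max x ζ).trans (max_le ?_ ?_))
  · exact (le_max_left _ _).trans (le_mul_of_one_le_right (by positivity) (le_max_right _ _))
  · exact (le_max_left _ _).trans (le_mul_of_one_le_left (by positivity) (le_max_right _ _))

variable (v) in
noncomputable def logMaxAbs (Q : K × K) : ℝ := Real.log (max (max (v Q.1) (v Q.2)) 1)

theorem logMaxAbs_nonneg (Q : K × K) : 0 ≤ logMaxAbs v Q :=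
  Real.log_nonneg (le_max_right _ _)

theorem escapeRate_nonneg {Q : ℕ → K × K} {l : ℝ}
    (h : Tendsto (fun N => ((d : ℝ)⁻¹) ^ N * logMaxAbs v (Q N)) atTop (nhds l)) : 0 ≤ l :=
  ge_of_tendsto' h fun N => mul_nonneg (by positivity) (logMaxAbs_nonneg _)

theorem escapeRate_eq_zero_of_bounded (hd : 2 ≤ d) {Q : ℕ → K × K} {C : ℝ}
    (hC : ∀ N, v (Q N).1 ≤ C ∧ v (Q N).2 ≤ C) {l : ℝ}
    (h : Tendsto (fun N => ((d : ℝ)⁻¹) ^ N * logMaxAbs v (Q N)) atTop (nhds l)) : l = 0 := by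
  refine eq_zero_of_tendsto_inv_pow_mul_of_bounded (C := Real.log (max C 1))
    (by exact_mod_cast (by omega : 1 < d)) (fun N => ?_) h
  rw [abs_of_nonneg (logMaxAbs_nonneg _)]
  exact Real.log_le_log (by positivity) (max_le_max (max_le (hC N).1 (hC N).2) le_rfl)

theorem escapeRate_pos_of_log_growth (hna : IsNonarchimedean w)
    (hw : ∀ x, w (algebraMap K L x) = v x) (hd : 2 ≤ d) {Q : ℕ → K × K} {ζ : L} {c : ℝ}
    (hc : 0 < c)
    (hgrowth : ∀ᶠ N in atTop, c * (d : ℝ) ^ N ≤ Real.log (w (algebraMap K L (Q N).2 - ζ)))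
    {l : ℝ} (h : Tendsto (fun N => ((d : ℝ)⁻¹) ^ N * logMaxAbs v (Q N)) atTop (nhds l)) :
    0 < l := by
  refine hc.trans_le (le_of_tendsto_inv_pow_mul (C := Real.log (max (w ζ) 1))
    (by exact_mod_cast (by omega : 1 < d)) (hgrowth.mono fun N hN => ?_) h)
  have := hna.log_abv_sub_le (algebraMap K L (Q N).2) ζ
  rw [hw] at this
  have : Real.log (max (v (Q N).2) 1) ≤ logMaxAbs v (Q N) :=
    Real.log_le_log (by positivity) (max_le_max (le_max_right _ _) le_rfl)
  linarith

theorem escapeRates_eq_zero_of_bounded (hd : 2 ≤ d) {P : K × K} {C : ℝ}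
    (hC : ∀ n, v (henonOrbit f P n) ≤ C) {lp lm : ℝ}
    (hlp : Tendsto (fun N => ((d : ℝ)⁻¹) ^ N * logMaxAbs v ((henon f)^[N] P)) atTop (nhds lp))
    (hlm : Tendsto (fun N => ((d : ℝ)⁻¹) ^ N * logMaxAbs v ((henon f).symm^[N] P)) atTop
      (nhds lm)) :
    lp = 0 ∧ lm = 0 :=
  ⟨escapeRate_eq_zero_of_bounded hd (C := C)
      (fun N => by simpa only [henon_iterate_apply] using ⟨hC _, hC _⟩) hlp,
    escapeRate_eq_zero_of_bounded hd (C := C)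
      (fun N => by simpa only [henon_symm_iterate_apply] using ⟨hC _, hC _⟩) hlm⟩

theorem escapeRates_eq_zero_of_iterate_eq (hd : 2 ≤ d) {P : K × K} {n : ℕ} (hn : 1 ≤ n)
    (hP : (henon f)^[n] P = P) {lp lm : ℝ}
    (hlp : Tendsto (fun N => ((d : ℝ)⁻¹) ^ N * logMaxAbs v ((henon f)^[N] P)) atTop (nhds lp))
    (hlm : Tendsto (fun N => ((d : ℝ)⁻¹) ^ N * logMaxAbs v ((henon f).symm^[N] P)) atTop
      (nhds lm)) :
    lp = 0 ∧ lm = 0 := by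
  obtain ⟨C, hC⟩ := ((Set.finite_Ico (0 : ℤ) n).image fun m => v (henonOrbit f P m)).bddAbove
  refine escapeRates_eq_zero_of_bounded hd (C := C) (fun m => ?_) hlp hlm
  obtain ⟨m', hm', heq⟩ := (henonOrbit_periodic hP).exists_mem_Ico₀ (by omega) m
  exact heq ▸ hC ⟨m', hm', rfl⟩

theorem exists_mem_roots_map [IsAlgClosed L] (hdeg : f.natDegree = d) (hd : 2 ≤ d) :
    ∃ ζ, ζ ∈ (f.map (algebraMap K L)).roots :=
  Multiset.card_pos_iff_exists_mem.mp <| by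
    rw [IsAlgClosed.card_roots_eq_natDegree, natDegree_map, hdeg]
    omega

theorem escapeRates_add_eq_zero_iff [IsAlgClosed L] (hv : IsNonarchimedean v)
    (hw : ∀ x, w (algebraMap K L x) = v x) (hf : f.Monic) (hdeg : f.natDegree = d)
    (hd : 2 ≤ d) {P : K × K} {lp lm : ℝ}
    (hlp : Tendsto (fun N => ((d : ℝ)⁻¹) ^ N * logMaxAbs v ((henon f)^[N] P)) atTop (nhds lp))
    (hlm : Tendsto (fun N => ((d : ℝ)⁻¹) ^ N * logMaxAbs v ((henon f).symm^[N] P)) atTop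
      (nhds lm)) :
    lp + lm = 0 ↔ StaysNearRoots w (f.map (algebraMap K L)) (algebraMap K L ∘ henonOrbit f P) := by
  have hna := hv.of_abv_algebraMap hw
  rw [add_eq_zero_iff_of_nonneg (escapeRate_nonneg hlp) (escapeRate_nonneg hlm)]
  constructor
  · rintro ⟨hlp0, hlm0⟩ n ζ hζ
    by_contra! hn
    have hdeg' : (f.map (algebraMap K L)).natDegree = d := by rw [natDegree_map, hdeg]
    obtain ⟨c, hc, hgrowth | hgrowth⟩ := exists_log_growth_of_step
      (a := fun m => w ((algebraMap K L ∘ henonOrbit f P) m - ζ)) one_le_rootSpread hd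
      (fun m hm => hdeg' ▸ abv_sub_root_pow_le_of_rootSpread_lt hna (hf.map _)
        (henonOrbit_map_recurrence _ P) hζ hm) hn
    · exact (escapeRate_pos_of_log_growth hna hw hd hc (Q := fun N => (henon f)^[N] P)
        (by simpa [henon_iterate_apply] using hgrowth) hlp).ne' hlp0
    · exact (escapeRate_pos_of_log_growth hna hw hd hc (Q := fun N => (henon f).symm^[N] P)
        (by simpa [henon_symm_iterate_apply] using hgrowth) hlm).ne' hlm0
  · intro hz
    obtain ⟨ζ, hζ⟩ := exists_mem_roots_map (L := L) hdeg hd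
    exact escapeRates_eq_zero_of_bounded hd (fun n => hw _ ▸ hz.abv_le hna hζ n) hlp hlm

end LocalHeight

theorem eq_zero_of_forall_abv_le_one {ι K : Type*} [Field K] {v : ι → AbsoluteValue K ℝ}
    (hprod : ∀ x : K, x ≠ 0 → (Function.mulSupport fun i => v i x).Finite ∧ ∏ᶠ i, v i x = 1)
    {x : K} (hle : ∀ i, v i x ≤ 1) (hlt : ∃ i, v i x < 1) : x = 0 := by
  classical
  by_contra hx
  obtain ⟨hfin, hone⟩ := hprod x hx
  obtain ⟨i, hi⟩ := hlt
  rw [finprod_eq_prod _ hfin, ← Finset.mul_prod_erase _ _ (hfin.mem_toFinset.mpr hi.ne)] at hone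
  have := Finset.prod_le_one (s := hfin.toFinset.erase i) (fun j _ => (v j).nonneg x)
    fun j _ => hle j
  nlinarith [(v i).nonneg x]

theorem finsum_eq_zero_iff_of_nonneg {ι : Type*} {g : ι → ℝ} (hg : (Function.support g).Finite)
    (h0 : ∀ i, 0 ≤ g i) : ∑ᶠ i, g i = 0 ↔ ∀ i, g i = 0 :=
  ⟨fun h i => le_antisymm (h ▸ single_le_finsum i hg h0) (h0 i),
    fun h => finsum_eq_zero_of_forall_eq_zero h⟩

theorem Set.finite_and_ncard_le_card_pow {α ι β : Type*} {s : Set α} {S : Finset ι}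
    {C : Finset β} (r : α → ι → β → Prop) (hcover : ∀ x ∈ s, ∀ i ∈ S, ∃ c ∈ C, r x i c)
    (hsep : ∀ x ∈ s, ∀ y ∈ s, (∀ i ∈ S, ∃ c, r x i c ∧ r y i c) → x = y) :
    s.Finite ∧ s.ncard ≤ C.card ^ S.card := by
  choose g hgC hgr using hcover
  let G : s → S → C := fun x i => ⟨g x x.2 i i.2, hgC x x.2 i i.2⟩
  have hG : Function.Injective G := fun x y hxy => Subtype.ext <|
    hsep x x.2 y y.2 fun i hi => ⟨g x x.2 i hi, hgr x x.2 i hi, by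
      have : g x x.2 i hi = g y y.2 i hi := congrArg Subtype.val (congrFun hxy ⟨i, hi⟩)
      exact this ▸ hgr y y.2 i hi⟩
  refine ⟨Set.finite_coe_iff.mp (Finite.of_injective G hG), ?_⟩
  rw [← Nat.card_coe_set_eq]
  calc Nat.card s ≤ Nat.card (S → C) := Nat.card_le_card_of_injective G hG
    _ = C.card ^ S.card := by rw [Nat.card_fun, Nat.card_eq_finsetCard, Nat.card_eq_finsetCard]

theorem Set.MapsTo.exists_iterate_eq {α : Type*} {f : α → α} {s : Set α}
    (hmaps : Set.MapsTo f s s) (hf : Function.Injective f) (hs : s.Finite) {x : α} (hx : x ∈ s) :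
    ∃ n, 1 ≤ n ∧ f^[n] x = x := by
  have : Finite s := hs.to_subtype
  obtain ⟨n, hn, hper⟩ := (hmaps.restrict_inj.mpr hf.injOn).mem_periodicPts ⟨x, hx⟩
  exact ⟨n, hn, by simpa [hmaps.coe_iterate_restrict] using congrArg Subtype.val hper⟩

section FilledJulia

variable {ι K L : Type*} [Field K] [Field L] [Algebra K L] {w : ι → AbsoluteValue L ℝ}
  {f : K[X]} {d : ℕ}

variable (w f) in
def filledJuliaPoints : Set (K × K) :=
  {P | ∀ i, StaysNearRoots (w i) (f.map (algebraMap K L)) (algebraMap K L ∘ henonOrbit f P)}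

theorem mapsTo_henon_filledJuliaPoints :
    Set.MapsTo (henon f) (filledJuliaPoints w f) (filledJuliaPoints w f) :=
  fun P hP i n ζ hζ => by
    simpa only [Function.comp_apply, henonOrbit_henon] using hP i (n + 1) ζ hζ

variable [IsAlgClosed L] {v : ι → AbsoluteValue K ℝ} {S : Finset ι}

theorem henonOrbit_eq_of_forall_abv_sub_lt_one
    (hprod : ∀ x : K, x ≠ 0 → (Function.mulSupport fun i => v i x).Finite ∧ ∏ᶠ i, v i x = 1)
    (hw : ∀ i x, w i (algebraMap K L x) = v i x) (hwna : ∀ i, IsNonarchimedean (w i))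
    (hdeg : f.natDegree = d) (hd : 2 ≤ d)
    (hS : ∀ i, i ∈ S ↔ 1 < rootSpread (w i) (f.map (algebraMap K L))) (hSne : S.Nonempty)
    {P Q : K × K} (hP : P ∈ filledJuliaPoints w f) (hQ : Q ∈ filledJuliaPoints w f) {n : ℤ}
    (hclose : ∀ i ∈ S, ∃ c, w i (algebraMap K L (henonOrbit f P n) - c) < 1 ∧
      w i (algebraMap K L (henonOrbit f Q n) - c) < 1) :
    henonOrbit f P n = henonOrbit f Q n := by
  obtain ⟨ζ, hζ⟩ := exists_mem_roots_map (L := L) hdeg hd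
  have hlt : ∀ i ∈ S, v i (henonOrbit f P n - henonOrbit f Q n) < 1 := fun i hi => by
    obtain ⟨c, hPc, hQc⟩ := hclose i hi
    rw [← hw, map_sub]
    exact ((hwna i).abv_sub_le_max_sub _ c _).trans_lt (max_lt hPc ((w i).map_sub c _ ▸ hQc))
  rw [← sub_eq_zero]
  refine eq_zero_of_forall_abv_le_one hprod (fun i => ?_) (hSne.imp hlt)
  by_cases hi : i ∈ S
  · exact (hlt i hi).le
  · rw [← hw, map_sub]
    exact ((hP i).abv_sub_le (hwna i) (hQ i) hζ n n).trans (not_lt.mp ((hS i).not.mp hi))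

theorem filledJuliaPoints_finite_and_ncard_le
    (hprod : ∀ x : K, x ≠ 0 → (Function.mulSupport fun i => v i x).Finite ∧ ∏ᶠ i, v i x = 1)
    (hw : ∀ i x, w i (algebraMap K L x) = v i x) (hwna : ∀ i, IsNonarchimedean (w i))
    (hf : f.Monic) (hdeg : f.natDegree = d) (hd : 2 ≤ d)
    (hS : ∀ i, i ∈ S ↔ 1 < rootSpread (w i) (f.map (algebraMap K L))) (hSne : S.Nonempty) :
    (filledJuliaPoints w f).Finite ∧ (filledJuliaPoints w f).ncard ≤ (3 * d ^ 6) ^ S.card := by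
  classical
  have hFdeg : (f.map (algebraMap K L)).natDegree = d := by rw [natDegree_map, hdeg]
  have hcenter : ∀ P ∈ filledJuliaPoints w f, ∀ i ∈ S, ∀ n,
      ∃ c ∈ centers (f.map (algebraMap K L)), w i (algebraMap K L (henonOrbit f P n) - c) < 1 :=
    fun P hP i hi => (hP i).exists_mem_centers_abv_sub_lt_one (hwna i) (hf.map _) (hFdeg ▸ hd)
      ((hS i).mp hi) (henonOrbit_map_recurrence _ P)
  set T := (centers (f.map (algebraMap K L))).toFinset
  obtain ⟨hfinite, hcard⟩ := Set.finite_and_ncard_le_card_pow (S := S) (C := T ×ˢ T)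
    (fun P i c => w i (algebraMap K L (henonOrbit f P (-1)) - c.1) < 1 ∧
      w i (algebraMap K L (henonOrbit f P 0) - c.2) < 1)
    (fun P hP i hi => by
      obtain ⟨c₁, hc₁, h₁⟩ := hcenter P hP i hi (-1)
      obtain ⟨c₂, hc₂, h₂⟩ := hcenter P hP i hi 0
      exact ⟨(c₁, c₂), by simp [T, hc₁, hc₂], h₁, h₂⟩)
    (fun P hP Q hQ hPQ => by
      have h₁ := henonOrbit_eq_of_forall_abv_sub_lt_one hprod hw hwna hdeg hd hS hSne hP hQ
        (n := -1) fun i hi => by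
          obtain ⟨c, hc⟩ := hPQ i hi
          exact ⟨c.1, hc.1.1, hc.2.1⟩
      have h₂ := henonOrbit_eq_of_forall_abv_sub_lt_one hprod hw hwna hdeg hd hS hSne hP hQ
        (n := 0) fun i hi => by
          obtain ⟨c, hc⟩ := hPQ i hi
          exact ⟨c.2, hc.1.2, hc.2.2⟩
      rw [henonOrbit_neg_one, henonOrbit_neg_one] at h₁
      rw [henonOrbit_zero, henonOrbit_zero] at h₂
      exact Prod.ext h₁ h₂)
  refine ⟨hfinite, hcard.trans (Nat.pow_le_pow_left ?_ _)⟩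
  have hT : T.card ≤ 3 * d ^ 2 :=
    (Multiset.toFinset_card_le _).trans (hFdeg ▸ card_centers_le)
  rw [Finset.card_product]
  calc T.card * T.card ≤ 3 * d ^ 2 * (3 * d ^ 2) := Nat.mul_le_mul hT hT
    _ ≤ 3 * d ^ 6 := by nlinarith [pow_le_pow_left₀ (Nat.zero_le 2) hd 2]

end FilledJulia

theorem stmt16_general {K : Type*} [Field K] {ι : Type*}
    (v : ι → AbsoluteValue K ℝ) (hna : ∀ i, IsNonarchimedean (v i))
    (hprod : ∀ x : K, x ≠ 0 →
      (Function.mulSupport fun i => v i x).Finite ∧ ∏ᶠ i, v i x = 1)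
    {L : Type*} [Field L] [Algebra K L] [IsAlgClosure K L]
    (w : ι → AbsoluteValue L ℝ)
    (hw : ∀ (i) (x : K), w i (algebraMap K L x) = v i x)
    (d : ℕ) (hd : 3 ≤ d) (f : K[X]) (hmonic : f.Monic) (hdeg : f.natDegree = d)
    (φ φi : K × K → K × K)
    (hφ : ∀ P, φ P = (P.2, P.1 + f.eval P.2))
    (hφi : ∀ P, φi P = (P.2 - f.eval P.1, P.1))
    (S : Set ι)
    (hS : S = {i | ∃ ζ₁ ζ₂ : L, (f.map (algebraMap K L)).eval ζ₁ = 0 ∧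
      (f.map (algebraMap K L)).eval ζ₂ = 0 ∧ 1 < w i (ζ₁ - ζ₂)})
    (hSfin : S.Finite) (s : ℕ) (hs : S.ncard = s) (hs1 : 1 ≤ s)
    (lp lm : ι → K × K → ℝ)
    (hlp : ∀ (i : ι) (P : K × K), Tendsto (fun N : ℕ => ((d : ℝ)⁻¹) ^ N *
      Real.log (max (max (v i (φ^[N] P).1) (v i (φ^[N] P).2)) 1)) atTop
      (nhds (lp i P)))
    (hlm : ∀ (i : ι) (P : K × K), Tendsto (fun N : ℕ => ((d : ℝ)⁻¹) ^ N *
      Real.log (max (max (v i (φi^[N] P).1) (v i (φi^[N] P).2)) 1)) atTop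
      (nhds (lm i P)))
    (hfin : ∀ P : K × K, (Function.support fun i => lp i P + lm i P).Finite)
    (hgt : K × K → ℝ) (hhgt : ∀ P, hgt P = ∑ᶠ i, (lp i P + lm i P)) :
    {P : K × K | hgt P = 0}.ncard ≤ (3 * d ^ 6) ^ s ∧
    (∀ P : K × K, hgt P = 0 ↔ ∃ n : ℕ, 1 ≤ n ∧ φ^[n] P = P) ∧
    {P : K × K | ∃ n : ℕ, 1 ≤ n ∧ φ^[n] P = P}.ncard ≤ (3 * d ^ 6) ^ s := by
  have : IsAlgClosed L := IsAlgClosure.isAlgClosed K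
  obtain rfl : φ = henon f := funext hφ
  obtain rfl : φi = (henon f).symm := funext hφi
  have hd2 : 2 ≤ d := by omega
  have hzero : {P | hgt P = 0} = filledJuliaPoints w f := Set.ext fun P => by
    change hgt P = 0 ↔ _
    rw [hhgt, finsum_eq_zero_iff_of_nonneg (hfin P) fun i =>
      add_nonneg (escapeRate_nonneg (hlp i P)) (escapeRate_nonneg (hlm i P))]
    exact forall_congr' fun i =>
      escapeRates_add_eq_zero_iff (hna i) (hw i) hmonic hdeg hd2 (hlp i P) (hlm i P)
  have hS' : ∀ i, i ∈ hSfin.toFinset ↔ 1 < rootSpread (w i) (f.map (algebraMap K L)) :=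
    fun i => by rw [Set.Finite.mem_toFinset, hS, one_lt_rootSpread_iff (hmonic.map _).ne_zero]; rfl
  obtain ⟨hfinite, hcard⟩ := filledJuliaPoints_finite_and_ncard_le hprod hw
    (fun i => (hna i).of_abv_algebraMap (hw i)) hmonic hdeg hd2 hS'
    (hSfin.toFinset_nonempty.mpr (Set.nonempty_of_ncard_ne_zero (by omega)))
  rw [← Set.ncard_eq_toFinset_card S hSfin, hs, ← hzero] at hcard
  have hper : ∀ P, hgt P = 0 ↔ ∃ n, 1 ≤ n ∧ (henon f)^[n] P = P := fun P =>
    ⟨fun h => mapsTo_henon_filledJuliaPoints.exists_iterate_eq (henon f).injective hfinite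
      (hzero ▸ h), fun ⟨n, hn, hP⟩ => (hhgt P).trans <| finsum_eq_zero_of_forall_eq_zero fun i => by
        obtain ⟨h₁, h₂⟩ := escapeRates_eq_zero_of_iterate_eq hd2 hn hP (hlp i P) (hlm i P)
        rw [h₁, h₂, add_zero]⟩
  exact ⟨hcard, hper, by rwa [← Set.ext hper]⟩

/-- Theorem 1.2, quantitative form: over a function field (product
formula field with non-archimedean places), for a non-isotrivial Hénon map
`φ(x,y) = (y, x+f(y))` with `f` monic of degree `d ≥ 3` and `s ≥ 1` places where
`ρ_v(f) > 1`, the set of points of canonical height zero has at most `(3d⁶)^s`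
elements; moreover canonical height zero is equivalent to periodicity, so `φ` has
at most `(3d⁶)^s` periodic points. -/
theorem stmt16 {K : Type*} [Field K] {ι : Type*}
    (v : ι → AbsoluteValue K ℝ) (hna : ∀ i, IsNonarchimedean (v i))
    (hnontriv : ∀ i, ∃ x : K, x ≠ 0 ∧ v i x ≠ 1)
    (hprod : ∀ x : K, x ≠ 0 →
      (Function.mulSupport fun i => v i x).Finite ∧ ∏ᶠ i, v i x = 1)
    {L : Type*} [Field L] [Algebra K L] [IsAlgClosure K L]
    (w : ι → AbsoluteValue L ℝ)
    (hw : ∀ (i) (x : K), w i (algebraMap K L x) = v i x)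
    (d : ℕ) (hd : 3 ≤ d) (f : K[X]) (hmonic : f.Monic) (hdeg : f.natDegree = d)
    (φ φi : K × K → K × K)
    (hφ : ∀ P, φ P = (P.2, P.1 + f.eval P.2))
    (hφi : ∀ P, φi P = (P.2 - f.eval P.1, P.1))
    (S : Set ι)
    (hS : S = {i | ∃ ζ₁ ζ₂ : L, (f.map (algebraMap K L)).eval ζ₁ = 0 ∧
      (f.map (algebraMap K L)).eval ζ₂ = 0 ∧ 1 < w i (ζ₁ - ζ₂)})
    (hSfin : S.Finite) (s : ℕ) (hs : S.ncard = s) (hs1 : 1 ≤ s)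
    (lp lm : ι → K × K → ℝ)
    (hlp : ∀ (i : ι) (P : K × K), Tendsto (fun N : ℕ => ((d : ℝ)⁻¹) ^ N *
      Real.log (max (max (v i (φ^[N] P).1) (v i (φ^[N] P).2)) 1)) atTop
      (nhds (lp i P)))
    (hlm : ∀ (i : ι) (P : K × K), Tendsto (fun N : ℕ => ((d : ℝ)⁻¹) ^ N *
      Real.log (max (max (v i (φi^[N] P).1) (v i (φi^[N] P).2)) 1)) atTop
      (nhds (lm i P)))
    (hfin : ∀ P : K × K, (Function.support fun i => lp i P + lm i P).Finite)
    (hgt : K × K → ℝ) (hhgt : ∀ P, hgt P = ∑ᶠ i, (lp i P + lm i P)) :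
    {P : K × K | hgt P = 0}.ncard ≤ (3 * d ^ 6) ^ s ∧
    (∀ P : K × K, hgt P = 0 ↔ ∃ n : ℕ, 1 ≤ n ∧ φ^[n] P = P) ∧
    {P : K × K | ∃ n : ℕ, 1 ≤ n ∧ φ^[n] P = P}.ncard ≤ (3 * d ^ 6) ^ s :=
  stmt16_general v hna hprod w hw d hd f hmonic hdeg φ φi hφ hφi S hS hSfin s hs hs1 lp lm hlp hlm
    hfin hgt hhgt
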